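/- arXiv:2410.07723 — 2 statements merged into one kernel-verified Lean document; each statement's English description precedes it below -/
import Mathlib

section
/- Let L > 0 and let μ ∈ ℝ be such that μ ≠ (kπ/L)² for every integer k ≥ 1. Then for all real boundary values α and β there exists exactly one function u : ℝ → ℝ, twice continuously differentiable on [0,L], satisfying u'' = -μ·u on (0,L), u(0) = α, and u(L) = β. (Uniqueness is understood as: any two such functions agree on [0,L].) -/
open Set Real

/-- The boundary value problem `u'' = -μ u` on `(0,L)`, `u(0) = α`, `u(L) = β`. -/
def IsBVPSolution (L μ α β : ℝ) (u : ℝ → ℝ) : Prop :=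
  ContDiffOn ℝ 2 u (Set.Icc 0 L) ∧
  (∀ x ∈ Set.Ioo 0 L, deriv (deriv u) x = -μ * u x) ∧
  u 0 = α ∧ u L = β

/-- Fundamental "cosine-like" solution of `u'' = -μ u` with `u 0 = 1`, `u' 0 = 0`. -/
noncomputable def Cfun (μ : ℝ) : ℝ → ℝ :=
  if 0 < μ then fun x => Real.cos (Real.sqrt μ * x)
  else if μ < 0 then fun x => Real.cosh (Real.sqrt (-μ) * x)
  else fun _ => 1

/-- Fundamental "sine-like" solution of `u'' = -μ u` with `u 0 = 0`, `u' 0 = 1`. -/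
noncomputable def Sfun (μ : ℝ) : ℝ → ℝ :=
  if 0 < μ then fun x => Real.sin (Real.sqrt μ * x) / Real.sqrt μ
  else if μ < 0 then fun x => Real.sinh (Real.sqrt (-μ) * x) / Real.sqrt (-μ)
  else fun x => x

lemma Cfun_zero (μ : ℝ) : Cfun μ 0 = 1 := by
  unfold Cfun; split_ifs <;> simp

lemma Sfun_zero (μ : ℝ) : Sfun μ 0 = 0 := by
  unfold Sfun; split_ifs <;> simp

lemma hasDerivAt_Cfun (μ x : ℝ) : HasDerivAt (Cfun μ) (-μ * Sfun μ x) x := by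
  rcases lt_trichotomy μ 0 with h | h | h
  · rw [Cfun, if_neg (by linarith), if_pos h, Sfun, if_neg (by linarith), if_pos h]
    have hω : (0:ℝ) < Real.sqrt (-μ) := Real.sqrt_pos.mpr (by linarith)
    have hsq : Real.sqrt (-μ) ^ 2 = -μ := Real.sq_sqrt (by linarith)
    have := ((hasDerivAt_id x).const_mul (Real.sqrt (-μ))).cosh
    refine this.congr_deriv (Eq.symm ?_)
    simp only [id]
    field_simp
    linear_combination (-Real.sinh (Real.sqrt (-μ) * x)) * hsq
  · subst h
    rw [Cfun, if_neg (lt_irrefl 0), if_neg (lt_irrefl 0)]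
    simpa using hasDerivAt_const x (1:ℝ)
  · rw [Cfun, if_pos h, Sfun, if_pos h]
    have hω : (0:ℝ) < Real.sqrt μ := Real.sqrt_pos.mpr h
    have hsq : Real.sqrt μ ^ 2 = μ := Real.sq_sqrt h.le
    have := ((hasDerivAt_id x).const_mul (Real.sqrt μ)).cos
    refine this.congr_deriv (Eq.symm ?_)
    simp only [id]
    field_simp
    linear_combination (Real.sin (Real.sqrt μ * x)) * hsq

lemma hasDerivAt_Sfun (μ x : ℝ) : HasDerivAt (Sfun μ) (Cfun μ x) x := by
  rcases lt_trichotomy μ 0 with h | h | h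
  · rw [Cfun, if_neg (by linarith), if_pos h, Sfun, if_neg (by linarith), if_pos h]
    have hω : (0:ℝ) < Real.sqrt (-μ) := Real.sqrt_pos.mpr (by linarith)
    have := (((hasDerivAt_id x).const_mul (Real.sqrt (-μ))).sinh).div_const (Real.sqrt (-μ))
    refine this.congr_deriv (Eq.symm ?_)
    simp only [id]
    field_simp
  · subst h
    rw [Cfun, if_neg (lt_irrefl 0), if_neg (lt_irrefl 0),
      Sfun, if_neg (lt_irrefl 0), if_neg (lt_irrefl 0)]
    exact hasDerivAt_id' x
  · rw [Cfun, if_pos h, Sfun, if_pos h]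
    have hω : (0:ℝ) < Real.sqrt μ := Real.sqrt_pos.mpr h
    have := (((hasDerivAt_id x).const_mul (Real.sqrt μ)).sin).div_const (Real.sqrt μ)
    refine this.congr_deriv (Eq.symm ?_)
    simp only [id]
    field_simp

lemma contDiff_Cfun (μ : ℝ) : ContDiff ℝ ⊤ (Cfun μ) := by
  unfold Cfun; split_ifs
  · exact Real.contDiff_cos.comp (contDiff_const.mul contDiff_id)
  · exact Real.contDiff_cosh.comp (contDiff_const.mul contDiff_id)
  · exact contDiff_const

lemma contDiff_Sfun (μ : ℝ) : ContDiff ℝ ⊤ (Sfun μ) := by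
  unfold Sfun; split_ifs
  · exact (Real.contDiff_sin.comp (contDiff_const.mul contDiff_id)).div_const _
  · exact (Real.contDiff_sinh.comp (contDiff_const.mul contDiff_id)).div_const _
  · exact contDiff_id

lemma Cfun_sq_add (μ x : ℝ) : Cfun μ x ^ 2 + μ * Sfun μ x ^ 2 = 1 := by
  set F : ℝ → ℝ := fun x => Cfun μ x ^ 2 + μ * Sfun μ x ^ 2 with hF
  have hFd : ∀ y, HasDerivAt F 0 y := by
    intro y
    have := ((hasDerivAt_Cfun μ y).pow 2).add
      (((hasDerivAt_Sfun μ y).pow 2).const_mul μ)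
    refine this.congr_deriv (Eq.symm ?_)
    ring
  have hconst : ∀ y, F y = F 0 := by
    intro y
    have hdiff : Differentiable ℝ F := fun z => (hFd z).differentiableAt
    have hder : ∀ z, deriv F z = 0 := fun z => (hFd z).deriv
    exact is_const_of_deriv_eq_zero hdiff hder y 0
  have h0 : F 0 = 1 := by simp [hF, Cfun_zero, Sfun_zero]
  have := hconst x
  rw [h0] at this
  simpa [hF] using this

lemma Sfun_L_ne (L μ : ℝ) (hL : 0 < L)
    (hμ : ∀ k : ℕ, 1 ≤ k → μ ≠ ((k : ℝ) * Real.pi / L) ^ 2) : Sfun μ L ≠ 0 := by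
  rcases lt_trichotomy μ 0 with h | h | h
  · rw [Sfun, if_neg (by linarith), if_pos h]
    have hω : (0:ℝ) < Real.sqrt (-μ) := Real.sqrt_pos.mpr (by linarith)
    exact ne_of_gt (div_pos (Real.sinh_pos_iff.mpr (mul_pos hω hL)) hω)
  · subst h
    rw [Sfun, if_neg (lt_irrefl 0), if_neg (lt_irrefl 0)]
    exact hL.ne'
  · rw [Sfun, if_pos h]
    have hω : (0:ℝ) < Real.sqrt μ := Real.sqrt_pos.mpr h
    intro hcon
    have hsin : Real.sin (Real.sqrt μ * L) = 0 := by
      rcases div_eq_zero_iff.mp hcon with h' | h'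
      · exact h'
      · exact absurd h' hω.ne'
    rw [Real.sin_eq_zero_iff] at hsin
    obtain ⟨n, hn⟩ := hsin
    have hnpos : 0 < (n : ℝ) := by
      have h1 : (0:ℝ) < Real.sqrt μ * L := mul_pos hω hL
      nlinarith [Real.pi_pos, hn]
    have hn0 : 0 < n := by exact_mod_cast hnpos
    have hn1 : 1 ≤ n.toNat := by omega
    apply hμ n.toNat hn1
    have hcast : ((n.toNat : ℕ) : ℝ) = (n : ℝ) := by
      exact_mod_cast congrArg (Int.cast : ℤ → ℝ) (Int.toNat_of_nonneg hn0.le)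
    rw [hcast]
    have hsq : Real.sqrt μ ^ 2 = μ := Real.sq_sqrt h.le
    have : (n : ℝ) * Real.pi / L = Real.sqrt μ := by
      field_simp [hn]
      linarith
    rw [this, hsq]

/-- Constancy from zero derivative on an open interval. -/
lemma const_on_Ioo {f : ℝ → ℝ} {a b : ℝ}
    (hf : ∀ x ∈ Set.Ioo a b, HasDerivAt f 0 x) :
    ∀ x ∈ Set.Ioo a b, ∀ y ∈ Set.Ioo a b, f x = f y := by
  have key : ∀ x ∈ Set.Ioo a b, ∀ y ∈ Set.Ioo a b, x ≤ y → f y = f x := by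
    intro x hx y hy hxy
    have hsub : Set.Icc x y ⊆ Set.Ioo a b := fun t ht =>
      ⟨lt_of_lt_of_le hx.1 ht.1, lt_of_le_of_lt ht.2 hy.2⟩
    have hcont : ContinuousOn f (Set.Icc x y) := fun t ht =>
      (hf t (hsub ht)).continuousAt.continuousWithinAt
    have hder : ∀ t ∈ Set.Ico x y, HasDerivWithinAt f 0 (Set.Ici t) t := fun t ht =>
      (hf t (hsub ⟨ht.1, ht.2.le⟩)).hasDerivWithinAt
    exact constant_of_has_deriv_right_zero hcont hder y ⟨hxy, le_refl y⟩
  intro x hx y hy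
  rcases le_total x y with h | h
  · exact (key x hx y hy h).symm
  · exact key y hy x hx h

/-- Every solution of `u'' = -μ u` on `(0,L)` that is `C²` on `[0,L]` is a linear
combination of the fundamental solutions on `[0,L]`. -/
lemma solution_repr (L μ : ℝ) (hL : 0 < L) (u : ℝ → ℝ)
    (hu : ContDiffOn ℝ 2 u (Set.Icc 0 L))
    (hode : ∀ x ∈ Set.Ioo 0 L, deriv (deriv u) x = -μ * u x) :
    ∃ A B : ℝ, ∀ x ∈ Set.Icc 0 L, u x = A * Cfun μ x + B * Sfun μ x := by
  have huo : ContDiffOn ℝ 2 u (Set.Ioo 0 L) := hu.mono Set.Ioo_subset_Icc_self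
  have hu1 : ∀ x ∈ Set.Ioo 0 L, HasDerivAt u (deriv u x) x := fun x hx =>
    ((huo.differentiableOn (by norm_num)).differentiableAt
      (Ioo_mem_nhds hx.1 hx.2)).hasDerivAt
  have hud : ContDiffOn ℝ 1 (deriv u) (Set.Ioo 0 L) :=
    huo.deriv_of_isOpen isOpen_Ioo (by norm_num)
  have hu2 : ∀ x ∈ Set.Ioo 0 L, HasDerivAt (deriv u) (-μ * u x) x := by
    intro x hx
    have := ((hud.differentiableOn one_ne_zero).differentiableAt
      (Ioo_mem_nhds hx.1 hx.2)).hasDerivAt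
    rwa [hode x hx] at this
  set W1 : ℝ → ℝ := fun x => u x * Cfun μ x - deriv u x * Sfun μ x with hW1
  set W2 : ℝ → ℝ := fun x => deriv u x * Cfun μ x + μ * (u x * Sfun μ x) with hW2
  have hW1d : ∀ x ∈ Set.Ioo 0 L, HasDerivAt W1 0 x := by
    intro x hx
    have := ((hu1 x hx).mul (hasDerivAt_Cfun μ x)).sub
      ((hu2 x hx).mul (hasDerivAt_Sfun μ x))
    refine this.congr_deriv (Eq.symm ?_)
    ring
  have hW2d : ∀ x ∈ Set.Ioo 0 L, HasDerivAt W2 0 x := by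
    intro x hx
    have := ((hu2 x hx).mul (hasDerivAt_Cfun μ x)).add
      (((hu1 x hx).mul (hasDerivAt_Sfun μ x)).const_mul μ)
    refine this.congr_deriv (Eq.symm ?_)
    ring
  have hx₀ : L / 2 ∈ Set.Ioo 0 L := ⟨by linarith, by linarith⟩
  refine ⟨W1 (L / 2), W2 (L / 2), ?_⟩
  have hIoo : ∀ x ∈ Set.Ioo 0 L, u x = W1 (L / 2) * Cfun μ x + W2 (L / 2) * Sfun μ x := by
    intro x hx
    have e1 : W1 (L / 2) = W1 x := const_on_Ioo hW1d (L / 2) hx₀ x hx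
    have e2 : W2 (L / 2) = W2 x := const_on_Ioo hW2d (L / 2) hx₀ x hx
    rw [e1, e2, hW1, hW2]
    have hp := Cfun_sq_add μ x
    have : (u x * Cfun μ x - deriv u x * Sfun μ x) * Cfun μ x +
        (deriv u x * Cfun μ x + μ * (u x * Sfun μ x)) * Sfun μ x
        = u x * (Cfun μ x ^ 2 + μ * Sfun μ x ^ 2) := by ring
    rw [this, hp, mul_one]
  -- extend by continuity from `Ioo` to `Icc`
  intro x hx
  have hcl : x ∈ closure (Set.Ioo 0 L) := by
    rw [closure_Ioo hL.ne]; exact hx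
  have hne : (nhdsWithin x (Set.Ioo 0 L)).NeBot :=
    mem_closure_iff_nhdsWithin_neBot.mp hcl
  have t1 : Filter.Tendsto u (nhdsWithin x (Set.Ioo 0 L)) (nhds (u x)) :=
    ((hu.continuousOn x hx).mono Set.Ioo_subset_Icc_self).tendsto
  set g : ℝ → ℝ := fun y => W1 (L / 2) * Cfun μ y + W2 (L / 2) * Sfun μ y with hg
  have hgc : Continuous g :=
    (continuous_const.mul (contDiff_Cfun μ).continuous).add
      (continuous_const.mul (contDiff_Sfun μ).continuous)
  have t2 : Filter.Tendsto u (nhdsWithin x (Set.Ioo 0 L)) (nhds (g x)) := by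
    refine Filter.Tendsto.congr' ?_ ((hgc.tendsto x).mono_left nhdsWithin_le_nhds)
    filter_upwards [self_mem_nhdsWithin] with y hy
    exact (hIoo y hy).symm
  exact tendsto_nhds_unique t1 t2

/-- If `μ` is not a Dirichlet eigenvalue of the negative second-derivative operator on
`(0, L)`, then for all boundary values `α, β` the boundary value problem
`u'' = -μ u`, `u(0) = α`, `u(L) = β` has exactly one solution (uniqueness understood
as agreement on `[0, L]`). -/
theorem bvp_unique_solvability (L μ : ℝ) (hL : 0 < L)
    (hμ : ∀ k : ℕ, 1 ≤ k → μ ≠ ((k : ℝ) * Real.pi / L) ^ 2) (α β : ℝ) :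
    (∃ u : ℝ → ℝ, IsBVPSolution L μ α β u) ∧
    (∀ u v : ℝ → ℝ, IsBVPSolution L μ α β u → IsBVPSolution L μ α β v →
      ∀ x ∈ Set.Icc 0 L, u x = v x) := by
  have hSL : Sfun μ L ≠ 0 := Sfun_L_ne L μ hL hμ
  set B₀ : ℝ := (β - α * Cfun μ L) / Sfun μ L with hB₀
  set u₀ : ℝ → ℝ := fun x => α * Cfun μ x + B₀ * Sfun μ x with hu₀
  have key : ∀ u, IsBVPSolution L μ α β u → ∀ x ∈ Set.Icc 0 L, u x = u₀ x := by
    intro u hu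
    obtain ⟨A, B, hrep⟩ := solution_repr L μ hL u hu.1 hu.2.1
    have h0 : u 0 = A := by
      have := hrep 0 ⟨le_refl 0, hL.le⟩
      simpa [Cfun_zero, Sfun_zero] using this
    have hA : A = α := by rw [← hu.2.2.1, h0]
    have hLv : β = A * Cfun μ L + B * Sfun μ L := by
      rw [← hu.2.2.2]; exact hrep L ⟨hL.le, le_refl L⟩
    have hB : B = B₀ := by
      rw [hB₀, ← hA]
      field_simp
      linarith [hLv]
    intro x hx
    rw [hrep x hx, hA, hB, hu₀]
  constructor
  · refine ⟨u₀, ?_, ?_, ?_, ?_⟩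
    · exact (((contDiff_const.mul (contDiff_Cfun μ)).add
        (contDiff_const.mul (contDiff_Sfun μ))).of_le le_top).contDiffOn
    · have h1 : ∀ x, HasDerivAt u₀ (α * (-μ * Sfun μ x) + B₀ * Cfun μ x) x := fun x =>
        ((hasDerivAt_Cfun μ x).const_mul α).add ((hasDerivAt_Sfun μ x).const_mul B₀)
      have hd : deriv u₀ = fun x => α * (-μ * Sfun μ x) + B₀ * Cfun μ x :=
        funext fun x => (h1 x).deriv
      have h2 : ∀ x, HasDerivAt (fun x => α * (-μ * Sfun μ x) + B₀ * Cfun μ x)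
          (-μ * u₀ x) x := by
        intro x
        have := (((hasDerivAt_Sfun μ x).const_mul (-μ)).const_mul α).add
          ((hasDerivAt_Cfun μ x).const_mul B₀)
        refine this.congr_deriv (Eq.symm ?_)
        simp only [hu₀]
        ring
      intro x _
      rw [hd]
      exact (h2 x).deriv
    · simp [hu₀, Cfun_zero, Sfun_zero]
    · rw [hu₀]
      simp only
      rw [hB₀]
      field_simp
      ring
  · intro u v hu hv x hx
    rw [key u hu x hx, key v hv x hx]
end

section
/- Fix integers n ≥ 1 and I ≥ 1, set R = (n+1)(I+1) + nI, and number the ACMS degrees of freedom of the n×n prototype crystal as follows: idx of vertex (i,j) is jR + i(I+1) for i,j ∈ {0,…,n}; idx of the k-th mode (1 ≤ k ≤ I) of the horizontal edge from (i,j) to (i+1,j) is jR + i(I+1) + k for i ∈ {0,…,n−1}, j ∈ {0,…,n}; idx of the k-th mode (1 ≤ k ≤ I) of the vertical edge from (i,j) to (i,j+1) is jR + (n+1) + nI + iI + (k−1) for i ∈ {0,…,n}, j ∈ {0,…,n−1}. Then this numbering is injective, and for every cell (a,b) with a,b ∈ {0,…,n−1}, any two degrees of freedom incident to that cell (its four vertices,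 its two horizontal edges, and its two vertical edges) have index difference at most R + I + 1 = (n+2)(I+1) + nI, which is at most 3(n+1)(I+1). Hence the bandwidth of the ACMS system matrix under this numbering is bounded by 3(n+1)(I+1), i.e., b_A = O(√J · I_ℰ) for J = n² subdomains. -/
/-- Degrees of freedom of the ACMS method on the `n × n` prototype crystal with `I` modes
per edge: vertices `(i,j)` with `i,j ∈ {0,…,n}`; the modes `k ∈ {1,…,I}` (represented as
`Fin I`, i.e. `k - 1 ∈ {0,…,I-1}`) of the horizontal edge from `(i,j)` to `(i+1,j)` with
`i ∈ {0,…,n-1}`, `j ∈ {0,…,n}`; and the modes of the vertical edge from `(i,j)` to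
`(i,j+1)` with `i ∈ {0,…,n}`, `j ∈ {0,…,n-1}`. -/
def AcmsDof (n I : ℕ) : Type :=
  (Fin (n + 1) × Fin (n + 1)) ⊕ (Fin n × Fin (n + 1) × Fin I) ⊕ (Fin (n + 1) × Fin n × Fin I)

/-- The row length `R = (n+1)(I+1) + nI` of the row-wise numbering. -/
def acmsR (n I : ℕ) : ℕ := (n + 1) * (I + 1) + n * I

/-- The row-wise numbering of the ACMS degrees of freedom: vertex `(i,j)` gets index
`jR + i(I+1)`; the `k`-th mode (`1 ≤ k ≤ I`, here `k = k' + 1` with `k' : Fin I`) of the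
horizontal edge from `(i,j)` to `(i+1,j)` gets index `jR + i(I+1) + k`; the `k`-th mode of
the vertical edge from `(i,j)` to `(i,j+1)` gets index `jR + (n+1) + nI + iI + (k-1)`. -/
def acmsIdx (n I : ℕ) : AcmsDof n I → ℕ := fun d =>
  match d with
  | Sum.inl (i, j) => (j : ℕ) * acmsR n I + (i : ℕ) * (I + 1)
  | Sum.inr (Sum.inl (i, j, k)) => (j : ℕ) * acmsR n I + (i : ℕ) * (I + 1) + ((k : ℕ) + 1)
  | Sum.inr (Sum.inr (i, j, k)) =>
      (j : ℕ) * acmsR n I + (n + 1) + n * I + (i : ℕ) * I + (k : ℕ)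

/-- A degree of freedom is incident to the cell `(a,b)` (the unit square
`[a,a+1] × [b,b+1]`) if it is one of the cell's four vertices, a mode of one of its two
horizontal edges, or a mode of one of its two vertical edges. -/
def AcmsIncident (n I a b : ℕ) : AcmsDof n I → Prop := fun d =>
  match d with
  | Sum.inl (i, j) => ((i : ℕ) = a ∨ (i : ℕ) = a + 1) ∧ ((j : ℕ) = b ∨ (j : ℕ) = b + 1)
  | Sum.inr (Sum.inl (i, j, _)) => (i : ℕ) = a ∧ ((j : ℕ) = b ∨ (j : ℕ) = b + 1)
  | Sum.inr (Sum.inr (i, j, _)) => ((i : ℕ) = a ∨ (i : ℕ) = a + 1) ∧ (j : ℕ) = b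


/-- Uniqueness of division with remainder. -/
lemma acms_cancel {R j o j' o' : ℕ} (ho : o < R) (ho' : o' < R)
    (h : j * R + o = j' * R + o') : j = j' ∧ o = o' := by
  have key : ∀ x y u v : ℕ, u < R → x < y → x * R + u < y * R + v := by
    intro x y u v hu hxy
    calc x * R + u < x * R + R := by omega
      _ = (x + 1) * R := by ring
      _ ≤ y * R := Nat.mul_le_mul_right R hxy
      _ ≤ y * R + v := Nat.le_add_right _ _
  have hj : j = j' := by
    rcases lt_trichotomy j j' with h1 | h1 | h1
    · exact absurd h (Nat.ne_of_lt (key _ _ _ _ ho h1))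
    · exact h1
    · exact absurd h.symm (Nat.ne_of_lt (key _ _ _ _ ho' h1))
  subst hj
  exact ⟨rfl, Nat.add_left_cancel h⟩


lemma acms_off_v (n I i : ℕ) (h : i ≤ n) : i * (I + 1) < acmsR n I := by
  unfold acmsR; nlinarith

lemma acms_off_h (n I i k : ℕ) (h : i < n) (hk : k < I) :
    i * (I + 1) + (k + 1) < acmsR n I := by
  unfold acmsR; nlinarith

lemma acms_off_e (n I i k : ℕ) (h : i ≤ n) (hk : k < I) :
    (n + 1) + n * I + (i * I + k) < acmsR n I := by
  unfold acmsR; nlinarith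


lemma acms_bound (n I a b : ℕ) (ha : a < n) (hb : b < n) (d : AcmsDof n I)
    (hd : AcmsIncident n I a b d) :
    b * acmsR n I + a * (I + 1) ≤ acmsIdx n I d ∧
      acmsIdx n I d ≤ b * acmsR n I + a * (I + 1) + (acmsR n I + I + 1) := by
  rcases d with ⟨i, j⟩ | ⟨i, j, k⟩ | ⟨i, j, k⟩
  · obtain ⟨hi | hi, hj | hj⟩ := hd <;>
      · simp only [acmsIdx, acmsR] at *
        rw [hi, hj]
        constructor <;> nlinarith
  · obtain ⟨hi, hj | hj⟩ := hd <;>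
      · have hk : (k : ℕ) < I := k.isLt
        simp only [acmsIdx, acmsR] at *
        rw [hi, hj]
        constructor <;> nlinarith
  · obtain ⟨hi | hi, hj⟩ := hd <;>
      · have hk : (k : ℕ) < I := k.isLt
        simp only [acmsIdx, acmsR] at *
        rw [hi, hj]
        constructor <;> nlinarith

lemma acms_inj (n I : ℕ) : Function.Injective (acmsIdx n I) := by
  intro d1 d2 h
  rcases d1 with ⟨i, j⟩ | ⟨i, j, k⟩ | ⟨i, j, k⟩ <;>
    rcases d2 with ⟨i', j'⟩ | ⟨i', j', k'⟩ | ⟨i', j', k'⟩ <;>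
      simp only [acmsIdx] at h
  -- V/V
  · obtain ⟨hj, ho⟩ := acms_cancel
      (acms_off_v n I i (Nat.le_of_lt_succ i.isLt))
      (acms_off_v n I i' (Nat.le_of_lt_succ i'.isLt)) h
    have hi : (i : ℕ) = i' := Nat.eq_of_mul_eq_mul_right (Nat.succ_pos I) ho
    rw [Fin.ext hi, Fin.ext hj]
  -- V/H
  · rw [Nat.add_assoc] at h
    obtain ⟨_, ho⟩ := acms_cancel
      (acms_off_v n I i (Nat.le_of_lt_succ i.isLt))
      (acms_off_h n I i' k' i'.isLt k'.isLt) h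
    obtain ⟨_, hzero⟩ := acms_cancel (Nat.succ_pos I)
      (by omega : (k' : ℕ) + 1 < I + 1) (by rw [Nat.add_zero]; exact ho)
    omega
  -- V/E
  · rw [show (j' : ℕ) * acmsR n I + (n + 1) + n * I + (i' : ℕ) * I + (k' : ℕ)
        = (j' : ℕ) * acmsR n I + ((n + 1) + n * I + ((i' : ℕ) * I + (k' : ℕ))) by ring] at h
    obtain ⟨_, ho⟩ := acms_cancel
      (acms_off_v n I i (Nat.le_of_lt_succ i.isLt))
      (acms_off_e n I i' k' (Nat.le_of_lt_succ i'.isLt) k'.isLt) h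
    have hle : (i : ℕ) * (I + 1) ≤ n * (I + 1) :=
      Nat.mul_le_mul_right _ (Nat.le_of_lt_succ i.isLt)
    exact absurd ho (by nlinarith)
  -- H/V
  · rw [Nat.add_assoc] at h
    obtain ⟨_, ho⟩ := acms_cancel
      (acms_off_h n I i k i.isLt k.isLt)
      (acms_off_v n I i' (Nat.le_of_lt_succ i'.isLt)) h
    obtain ⟨_, hzero⟩ := acms_cancel
      (by omega : (k : ℕ) + 1 < I + 1) (Nat.succ_pos I)
      (by rw [Nat.add_zero]; exact ho)
    omega
  -- H/H
  · rw [Nat.add_assoc, Nat.add_assoc] at h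
    obtain ⟨hj, ho⟩ := acms_cancel
      (acms_off_h n I i k i.isLt k.isLt)
      (acms_off_h n I i' k' i'.isLt k'.isLt) h
    obtain ⟨hi, hk⟩ := acms_cancel
      (by omega : (k : ℕ) + 1 < I + 1) (by omega : (k' : ℕ) + 1 < I + 1) ho
    have e3 : k = k' := Fin.ext (by omega)
    rw [Fin.ext hi, Fin.ext hj, e3]
  -- H/E
  · rw [Nat.add_assoc, show (j' : ℕ) * acmsR n I + (n + 1) + n * I + (i' : ℕ) * I + (k' : ℕ)
        = (j' : ℕ) * acmsR n I + ((n + 1) + n * I + ((i' : ℕ) * I + (k' : ℕ))) by ring] at h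
    obtain ⟨_, ho⟩ := acms_cancel
      (acms_off_h n I i k i.isLt k.isLt)
      (acms_off_e n I i' k' (Nat.le_of_lt_succ i'.isLt) k'.isLt) h
    have hle : ((i : ℕ) + 1) * (I + 1) ≤ n * (I + 1) :=
      Nat.mul_le_mul_right _ i.isLt
    have hk : (k : ℕ) < I := k.isLt
    exact absurd ho (by nlinarith)
  -- E/V
  · rw [show (j : ℕ) * acmsR n I + (n + 1) + n * I + (i : ℕ) * I + (k : ℕ)
        = (j : ℕ) * acmsR n I + ((n + 1) + n * I + ((i : ℕ) * I + (k : ℕ))) by ring] at h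
    obtain ⟨_, ho⟩ := acms_cancel
      (acms_off_e n I i k (Nat.le_of_lt_succ i.isLt) k.isLt)
      (acms_off_v n I i' (Nat.le_of_lt_succ i'.isLt)) h
    have hle : (i' : ℕ) * (I + 1) ≤ n * (I + 1) :=
      Nat.mul_le_mul_right _ (Nat.le_of_lt_succ i'.isLt)
    exact absurd ho (by nlinarith)
  -- E/H
  · rw [show (j : ℕ) * acmsR n I + (n + 1) + n * I + (i : ℕ) * I + (k : ℕ)
        = (j : ℕ) * acmsR n I + ((n + 1) + n * I + ((i : ℕ) * I + (k : ℕ))) by ring,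
      show (j' : ℕ) * acmsR n I + (i' : ℕ) * (I + 1) + ((k' : ℕ) + 1)
        = (j' : ℕ) * acmsR n I + ((i' : ℕ) * (I + 1) + ((k' : ℕ) + 1)) by ring] at h
    obtain ⟨_, ho⟩ := acms_cancel
      (acms_off_e n I i k (Nat.le_of_lt_succ i.isLt) k.isLt)
      (acms_off_h n I i' k' i'.isLt k'.isLt) h
    have hle : ((i' : ℕ) + 1) * (I + 1) ≤ n * (I + 1) :=
      Nat.mul_le_mul_right _ i'.isLt
    have hk' : (k' : ℕ) < I := k'.isLt
    exact absurd ho (by nlinarith)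
  -- E/E
  · rw [show (j : ℕ) * acmsR n I + (n + 1) + n * I + (i : ℕ) * I + (k : ℕ)
        = (j : ℕ) * acmsR n I + ((n + 1) + n * I + ((i : ℕ) * I + (k : ℕ))) by ring,
      show (j' : ℕ) * acmsR n I + (n + 1) + n * I + (i' : ℕ) * I + (k' : ℕ)
        = (j' : ℕ) * acmsR n I + ((n + 1) + n * I + ((i' : ℕ) * I + (k' : ℕ))) by ring] at h
    obtain ⟨hj, ho⟩ := acms_cancel
      (acms_off_e n I i k (Nat.le_of_lt_succ i.isLt) k.isLt)
      (acms_off_e n I i' k' (Nat.le_of_lt_succ i'.isLt) k'.isLt) h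
    have ho2 : (i : ℕ) * I + (k : ℕ) = (i' : ℕ) * I + (k' : ℕ) :=
      Nat.add_left_cancel ho
    obtain ⟨hi, hk⟩ := acms_cancel k.isLt k'.isLt ho2
    rw [Fin.ext hi, Fin.ext hj, Fin.ext hk]

/-- The row-wise numbering of the ACMS degrees of freedom of the `n × n` prototype crystal
is injective; any two degrees of freedom incident to a common cell have index difference
at most `R + I + 1 = (n+2)(I+1) + nI ≤ 3(n+1)(I+1)`. Hence the bandwidth of the ACMS
system matrix is bounded by `3(n+1)(I+1)`, i.e. `b_A = O(√J · I_ℰ)` for `J = n²`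
subdomains. -/
theorem acms_bandwidth (n I : ℕ) (hn : 1 ≤ n) (hI : 1 ≤ I) :
    Function.Injective (acmsIdx n I) ∧
    (∀ a b : ℕ, a < n → b < n → ∀ d₁ d₂ : AcmsDof n I,
      AcmsIncident n I a b d₁ → AcmsIncident n I a b d₂ →
      Nat.dist (acmsIdx n I d₁) (acmsIdx n I d₂) ≤ acmsR n I + I + 1) ∧
    acmsR n I + I + 1 = (n + 2) * (I + 1) + n * I ∧
    (n + 2) * (I + 1) + n * I ≤ 3 * ((n + 1) * (I + 1)) := by
  refine ⟨acms_inj n I, ?_, ?_, ?_⟩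
  · intro a b ha hb d₁ d₂ h₁ h₂
    obtain ⟨l1, u1⟩ := acms_bound n I a b ha hb d₁ h₁
    obtain ⟨l2, u2⟩ := acms_bound n I a b ha hb d₂ h₂
    have hd : Nat.dist (acmsIdx n I d₁) (acmsIdx n I d₂)
        = (acmsIdx n I d₁ - acmsIdx n I d₂) + (acmsIdx n I d₂ - acmsIdx n I d₁) := rfl
    generalize b * acmsR n I + a * (I + 1) = L at l1 u1 l2 u2
    rw [hd]; omega
  · unfold acmsR; ring
  · nlinarith
end
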